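/- Fix a₁, a₂ > 0, ν > 0, and data ỹ ∈ ℝ⁴ with (ỹ₁, ỹ₃) ≠ (0,0), (ỹ₂, ỹ₄) ≠ (0,0), and A ≠ 0. Then the weighted triangulation problem with weights λ = (a₁, νa₁, a₂, νa₂) has exactly two critical points, namely ε^+ and ε^−; i.e., a vector ε ∈ ℝ⁴ is a critical point if and only if ε = ε^+ or ε = ε^−. -/
import Mathlib


open Matrix Real

noncomputable section

/-- q = (a₁, −a₁, a₂, −a₂). -/
def qv (a₁ a₂ : ℝ) : Fin 4 → ℝ := ![a₁, -a₁, a₂, -a₂]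

/-- The weights λ = (a₁, νa₁, a₂, νa₂). -/
def lv (a₁ a₂ ν : ℝ) : Fin 4 → ℝ := ![a₁, ν * a₁, a₂, ν * a₂]

/-- A = a₁ỹ₁² − ν²a₁ỹ₂² + a₂ỹ₃² − ν²a₂ỹ₄². -/
def Aq (a₁ a₂ ν : ℝ) (y : Fin 4 → ℝ) : ℝ :=
  a₁ * y 0 ^ 2 - ν ^ 2 * a₁ * y 1 ^ 2 + a₂ * y 2 ^ 2 - ν ^ 2 * a₂ * y 3 ^ 2

/-- B = 2ν(a₁ỹ₁² + νa₁ỹ₂² + a₂ỹ₃² + νa₂ỹ₄²). -/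
def Bq (a₁ a₂ ν : ℝ) (y : Fin 4 → ℝ) : ℝ :=
  2 * ν * (a₁ * y 0 ^ 2 + ν * a₁ * y 1 ^ 2 + a₂ * y 2 ^ 2 + ν * a₂ * y 3 ^ 2)

/-- C = ν²(a₁ỹ₁² − a₁ỹ₂² + a₂ỹ₃² − a₂ỹ₄²). -/
def Cq (a₁ a₂ ν : ℝ) (y : Fin 4 → ℝ) : ℝ :=
  ν ^ 2 * (a₁ * y 0 ^ 2 - a₁ * y 1 ^ 2 + a₂ * y 2 ^ 2 - a₂ * y 3 ^ 2)

/-- Δ = B² − 4AC. -/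
def Dq (a₁ a₂ ν : ℝ) (y : Fin 4 → ℝ) : ℝ :=
  Bq a₁ a₂ ν y ^ 2 - 4 * Aq a₁ a₂ ν y * Cq a₁ a₂ ν y

/-- s⁺ = (−B + √Δ)/(2A). -/
def sP (a₁ a₂ ν : ℝ) (y : Fin 4 → ℝ) : ℝ :=
  (-Bq a₁ a₂ ν y + Real.sqrt (Dq a₁ a₂ ν y)) / (2 * Aq a₁ a₂ ν y)

/-- s⁻ = (−B − √Δ)/(2A). -/
def sM (a₁ a₂ ν : ℝ) (y : Fin 4 → ℝ) : ℝ :=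
  (-Bq a₁ a₂ ν y - Real.sqrt (Dq a₁ a₂ ν y)) / (2 * Aq a₁ a₂ ν y)

/-- ε⁺ᵢ = s⁺qᵢỹᵢ/(λᵢ − s⁺qᵢ). -/
def eP (a₁ a₂ ν : ℝ) (y : Fin 4 → ℝ) : Fin 4 → ℝ := fun i =>
  sP a₁ a₂ ν y * qv a₁ a₂ i * y i / (lv a₁ a₂ ν i - sP a₁ a₂ ν y * qv a₁ a₂ i)

/-- ε⁻ᵢ = s⁻qᵢỹᵢ/(λᵢ − s⁻qᵢ). -/
def eM (a₁ a₂ ν : ℝ) (y : Fin 4 → ℝ) : Fin 4 → ℝ := fun i =>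
  sM a₁ a₂ ν y * qv a₁ a₂ i * y i / (lv a₁ a₂ ν i - sM a₁ a₂ ν y * qv a₁ a₂ i)

/-- ε is a critical point of the weighted triangulation problem with weights l:
the constraint ∑ᵢ qᵢ(ỹᵢ + εᵢ)² = 0 holds and there is a Lagrange multiplier s with
lᵢεᵢ = s·qᵢ·(ỹᵢ + εᵢ) for all i. -/
def IsCrit (a₁ a₂ : ℝ) (l : Fin 4 → ℝ) (y ε : Fin 4 → ℝ) : Prop :=
  (∑ i, qv a₁ a₂ i * (y i + ε i) ^ 2 = 0) ∧
    ∃ s : ℝ, ∀ i, l i * ε i = s * qv a₁ a₂ i * (y i + ε i)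

end

lemma lag (L Q yi s : ℝ) (h : L - s * Q ≠ 0) :
    L * (s * Q * yi / (L - s * Q)) = s * Q * (yi + s * Q * yi / (L - s * Q)) := by
  field_simp; ring

lemma eq_of_lag (L Q yi s e : ℝ) (h : L * e = s * Q * (yi + e)) (hd : L - s * Q ≠ 0) :
    e = s * Q * yi / (L - s * Q) := by
  field_simp
  linear_combination h

lemma denoms_ne (a₁ a₂ ν : ℝ) (ha₁ : 0 < a₁) (ha₂ : 0 < a₂) (s : ℝ)
    (hs1 : s ≠ 1) (hs2 : s ≠ -ν) :
    ∀ i, lv a₁ a₂ ν i - s * qv a₁ a₂ i ≠ 0 := by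
  have h1 : (1 : ℝ) - s ≠ 0 := by intro h; apply hs1; linarith
  have h2 : ν + s ≠ 0 := by intro h; apply hs2; linarith
  have r0 : a₁ - s * a₁ = a₁ * (1 - s) := by ring
  have r1 : ν * a₁ - s * -a₁ = a₁ * (ν + s) := by ring
  have r2 : a₂ - s * a₂ = a₂ * (1 - s) := by ring
  have r3 : ν * a₂ - s * -a₂ = a₂ * (ν + s) := by ring
  have d0 : a₁ - s * a₁ ≠ 0 := by rw [r0]; exact mul_ne_zero ha₁.ne' h1
  have d1 : ν * a₁ - s * -a₁ ≠ 0 := by rw [r1]; exact mul_ne_zero ha₁.ne' h2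
  have d2 : a₂ - s * a₂ ≠ 0 := by rw [r2]; exact mul_ne_zero ha₂.ne' h1
  have d3 : ν * a₂ - s * -a₂ ≠ 0 := by rw [r3]; exact mul_ne_zero ha₂.ne' h2
  intro i
  fin_cases i <;>
    simpa only [qv, lv, Matrix.cons_val_zero, Matrix.cons_val_one, Matrix.head_cons,
      Matrix.cons_val_two, Matrix.tail_cons, Matrix.cons_val_three] using
      (by assumption : _)

lemma sum_val (a₁ a₂ ν : ℝ) (y : Fin 4 → ℝ)
    (ha₁ : 0 < a₁) (ha₂ : 0 < a₂) (s : ℝ) (hs1 : s ≠ 1) (hs2 : s ≠ -ν) :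
    ∑ i, qv a₁ a₂ i * (y i + s * qv a₁ a₂ i * y i / (lv a₁ a₂ ν i - s * qv a₁ a₂ i)) ^ 2 =
      (Aq a₁ a₂ ν y * s ^ 2 + Bq a₁ a₂ ν y * s + Cq a₁ a₂ ν y) /
        ((1 - s) ^ 2 * (ν + s) ^ 2) := by
  have h1 : (1 : ℝ) - s ≠ 0 := by intro h; apply hs1; linarith
  have h2 : ν + s ≠ 0 := by intro h; apply hs2; linarith
  have ha₁' := ha₁.ne'
  have ha₂' := ha₂.ne'
  have r0 : a₁ - s * a₁ = a₁ * (1 - s) := by ring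
  have r1 : ν * a₁ - s * -a₁ = a₁ * (ν + s) := by ring
  have r2 : a₂ - s * a₂ = a₂ * (1 - s) := by ring
  have r3 : ν * a₂ - s * -a₂ = a₂ * (ν + s) := by ring
  rw [Fin.sum_univ_four]
  simp only [qv, lv, Matrix.cons_val_zero, Matrix.cons_val_one,
    Matrix.head_cons, Matrix.cons_val_two, Matrix.tail_cons, Matrix.cons_val_three]
  have e0 : y 0 + s * a₁ * y 0 / (a₁ - s * a₁) = y 0 / (1 - s) := by
    rw [r0]; field_simp; ring
  have e1 : y 1 + s * -a₁ * y 1 / (ν * a₁ - s * -a₁) = ν * y 1 / (ν + s) := by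
    rw [r1]; field_simp; ring
  have e2 : y 2 + s * a₂ * y 2 / (a₂ - s * a₂) = y 2 / (1 - s) := by
    rw [r2]; field_simp; ring
  have e3 : y 3 + s * -a₂ * y 3 / (ν * a₂ - s * -a₂) = ν * y 3 / (ν + s) := by
    rw [r3]; field_simp; ring
  rw [e0, e1, e2, e3]
  unfold Aq Bq Cq
  field_simp
  ring

lemma crit_of_root (a₁ a₂ ν : ℝ) (y : Fin 4 → ℝ)
    (ha₁ : 0 < a₁) (ha₂ : 0 < a₂) (s : ℝ)
    (hroot : Aq a₁ a₂ ν y * s ^ 2 + Bq a₁ a₂ ν y * s + Cq a₁ a₂ ν y = 0)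
    (hs1 : s ≠ 1) (hs2 : s ≠ -ν) :
    IsCrit a₁ a₂ (lv a₁ a₂ ν) y
      (fun i => s * qv a₁ a₂ i * y i / (lv a₁ a₂ ν i - s * qv a₁ a₂ i)) := by
  constructor
  · rw [sum_val a₁ a₂ ν y ha₁ ha₂ s hs1 hs2, hroot, zero_div]
  · exact ⟨s, fun i => lag _ _ _ _ (denoms_ne a₁ a₂ ν ha₁ ha₂ s hs1 hs2 i)⟩

lemma root_ne (a₁ a₂ ν : ℝ) (y : Fin 4 → ℝ)
    (ha₁ : 0 < a₁) (ha₂ : 0 < a₂) (hν : 0 < ν)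
    (h13 : ¬(y 0 = 0 ∧ y 2 = 0)) (h24 : ¬(y 1 = 0 ∧ y 3 = 0)) (s : ℝ)
    (hroot : Aq a₁ a₂ ν y * s ^ 2 + Bq a₁ a₂ ν y * s + Cq a₁ a₂ ν y = 0) :
    s ≠ 1 ∧ s ≠ -ν := by
  have hP : 0 < a₁ * y 0 ^ 2 + a₂ * y 2 ^ 2 := by
    rcases not_and_or.mp h13 with h | h
    · have : 0 < y 0 ^ 2 := by positivity
      nlinarith [sq_nonneg (y 2)]
    · have : 0 < y 2 ^ 2 := by positivity
      nlinarith [sq_nonneg (y 0)]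
  have hQ : 0 < a₁ * y 1 ^ 2 + a₂ * y 3 ^ 2 := by
    rcases not_and_or.mp h24 with h | h
    · have : 0 < y 1 ^ 2 := by positivity
      nlinarith [sq_nonneg (y 3)]
    · have : 0 < y 3 ^ 2 := by positivity
      nlinarith [sq_nonneg (y 1)]
  constructor
  · rintro rfl
    unfold Aq Bq Cq at hroot
    nlinarith [hP, sq_nonneg (1 + ν), mul_pos hP (by positivity : (0:ℝ) < (1 + ν) ^ 2)]
  · rintro rfl
    unfold Aq Bq Cq at hroot
    nlinarith [hQ, mul_pos (mul_pos hQ (by positivity : (0:ℝ) < ν ^ 2))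
      (by positivity : (0:ℝ) < (1 + ν) ^ 2)]

lemma disc_sq (a₁ a₂ ν : ℝ) (y : Fin 4 → ℝ)
    (ha₁ : 0 < a₁) (ha₂ : 0 < a₂) (hν : 0 < ν) :
    discrim (Aq a₁ a₂ ν y) (Bq a₁ a₂ ν y) (Cq a₁ a₂ ν y) =
      Real.sqrt (Dq a₁ a₂ ν y) * Real.sqrt (Dq a₁ a₂ ν y) := by
  have hD : 0 ≤ Dq a₁ a₂ ν y := by
    have h : Dq a₁ a₂ ν y = 4 * ν ^ 2 * (1 + ν) ^ 2 * (a₁ * y 0 ^ 2 + a₂ * y 2 ^ 2) *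
        (a₁ * y 1 ^ 2 + a₂ * y 3 ^ 2) := by
      unfold Dq Aq Bq Cq; ring
    rw [h]; positivity
  rw [Real.mul_self_sqrt hD]
  unfold discrim Dq; ring

/-- the weighted triangulation problem with weights (a₁, νa₁, a₂, νa₂) has
exactly two critical points, namely ε⁺ and ε⁻. -/
theorem exactly_two_critical_points (a₁ a₂ ν : ℝ) (y : Fin 4 → ℝ)
    (ha₁ : 0 < a₁) (ha₂ : 0 < a₂) (hν : 0 < ν)
    (h13 : ¬(y 0 = 0 ∧ y 2 = 0)) (h24 : ¬(y 1 = 0 ∧ y 3 = 0))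
    (hA : Aq a₁ a₂ ν y ≠ 0) :
    ∀ ε : Fin 4 → ℝ,
      IsCrit a₁ a₂ (lv a₁ a₂ ν) y ε ↔ ε = eP a₁ a₂ ν y ∨ ε = eM a₁ a₂ ν y := by
  have hquad := fun s => quadratic_eq_zero_iff hA (disc_sq a₁ a₂ ν y ha₁ ha₂ hν) s
  intro ε
  constructor
  · rintro ⟨hc, s, hL⟩
    have h0 := hL 0
    have h1 := hL 1
    have h2 := hL 2
    have h3 := hL 3
    simp only [qv, lv, Matrix.cons_val_zero, Matrix.cons_val_one, Matrix.head_cons,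
      Matrix.cons_val_two, Matrix.tail_cons, Matrix.cons_val_three] at h0 h1 h2 h3
    have hs1 : s ≠ 1 := by
      rintro rfl
      apply h13
      constructor
      · have h : a₁ * y 0 = 0 := by linear_combination -h0
        exact (mul_eq_zero.mp h).resolve_left ha₁.ne'
      · have h : a₂ * y 2 = 0 := by linear_combination -h2
        exact (mul_eq_zero.mp h).resolve_left ha₂.ne'
    have hs2 : s ≠ -ν := by
      rintro rfl
      apply h24
      constructor
      · have h : ν * a₁ * y 1 = 0 := by linear_combination -h1
        rcases mul_eq_zero.mp h with h | h
        · exact absurd h (mul_ne_zero hν.ne' ha₁.ne')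
        · exact h
      · have h : ν * a₂ * y 3 = 0 := by linear_combination -h3
        rcases mul_eq_zero.mp h with h | h
        · exact absurd h (mul_ne_zero hν.ne' ha₂.ne')
        · exact h
    have key := denoms_ne a₁ a₂ ν ha₁ ha₂ s hs1 hs2
    have hε : ∀ i, ε i = s * qv a₁ a₂ i * y i / (lv a₁ a₂ ν i - s * qv a₁ a₂ i) :=
      fun i => eq_of_lag _ _ _ _ _ (hL i) (key i)
    have hεf : ε = fun i => s * qv a₁ a₂ i * y i / (lv a₁ a₂ ν i - s * qv a₁ a₂ i) :=
      funext hε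
    rw [hεf] at hc
    rw [sum_val a₁ a₂ ν y ha₁ ha₂ s hs1 hs2] at hc
    have h1' : (1 : ℝ) - s ≠ 0 := by intro h; apply hs1; linarith
    have h2' : ν + s ≠ 0 := by intro h; apply hs2; linarith
    have hroot : Aq a₁ a₂ ν y * s ^ 2 + Bq a₁ a₂ ν y * s + Cq a₁ a₂ ν y = 0 := by
      have hd : ((1 : ℝ) - s) ^ 2 * (ν + s) ^ 2 ≠ 0 :=
        mul_ne_zero (pow_ne_zero _ h1') (pow_ne_zero _ h2')
      exact (div_eq_zero_iff.mp hc).resolve_right hd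
    have hroot' : Aq a₁ a₂ ν y * (s * s) + Bq a₁ a₂ ν y * s + Cq a₁ a₂ ν y = 0 := by
      linear_combination hroot
    rcases (hquad s).mp hroot' with hs | hs
    · left; rw [hεf, hs]; rfl
    · right; rw [hεf, hs]; rfl
  · have mk : ∀ s : ℝ, Aq a₁ a₂ ν y * (s * s) + Bq a₁ a₂ ν y * s + Cq a₁ a₂ ν y = 0 →
        IsCrit a₁ a₂ (lv a₁ a₂ ν) y
          (fun i => s * qv a₁ a₂ i * y i / (lv a₁ a₂ ν i - s * qv a₁ a₂ i)) := by
      intro s hr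
      have hroot : Aq a₁ a₂ ν y * s ^ 2 + Bq a₁ a₂ ν y * s + Cq a₁ a₂ ν y = 0 := by
        linear_combination hr
      obtain ⟨hs1, hs2⟩ := root_ne a₁ a₂ ν y ha₁ ha₂ hν h13 h24 s hroot
      exact crit_of_root a₁ a₂ ν y ha₁ ha₂ s hroot hs1 hs2
    rintro (rfl | rfl)
    · exact mk _ ((hquad _).mpr (Or.inl rfl))
    · exact mk _ ((hquad _).mpr (Or.inr rfl))
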